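/- arXiv:math/0307279 — 2 statements merged into one kernel-verified Lean document; each statement's English description precedes it below -/
import Mathlib

section
/- For every real x > 0, the Bessel function of the first kind of order 2 satisfies |J₂(x)| ≤ x^{−1/2}. -/
/-!
For `x ≤ 5/2` two terms of the alternating series, with the tail bounded by a geometric series,
already give `x J₂(x)² ≤ 1`. For `x ≥ 5/2` we use Sonin's monotonicity argument: `u = √x J₂`
solves `u'' + Q u = 0` with `Q x = 1 - 15 / (4 x²)` increasing, so `u² + u'² / Q` is
nonincreasing, and `x J₂(x)² = u² ≤ (u² + u'² / Q)(5/2) ≈ 0.83`, a value computed from four terms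
of the series of `J₂` and `J₂'`.
-/

open Set Finset Nat

/-- If `f` solves Bessel's equation of order `ν`, then `u = √x f` solves
`u'' + Q u = 0` with `Q x = 1 - (4 ν² - 1) / (4 x²)`, and this is `u² + u'² / Q`. -/
noncomputable def besselSonin (ν : ℝ) (f f' : ℝ → ℝ) (x : ℝ) : ℝ :=
  x * f x ^ 2 + x * (f x + 2 * x * f' x) ^ 2 / (4 * x ^ 2 - (4 * ν ^ 2 - 1))

section Sonin

variable {ν : ℝ} {f f' f'' : ℝ → ℝ}

theorem hasDerivAt_besselSonin {x : ℝ} (hx : x ≠ 0) (hQ : 4 * x ^ 2 - (4 * ν ^ 2 - 1) ≠ 0)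
    (hf : HasDerivAt f (f' x) x) (hf' : HasDerivAt f' (f'' x) x)
    (hode : x ^ 2 * f'' x + x * f' x + (x ^ 2 - ν ^ 2) * f x = 0) :
    HasDerivAt (besselSonin ν f f')
      (-2 * (4 * ν ^ 2 - 1) * (f x + 2 * x * f' x) ^ 2 / (4 * x ^ 2 - (4 * ν ^ 2 - 1)) ^ 2) x := by
  have hu : HasDerivAt (fun y => f y + 2 * y * f' y) (3 * f' x + 2 * x * f'' x) x := by
    refine (hf.fun_add (((hasDerivAt_id' x).const_mul 2).fun_mul hf')).congr_deriv ?_; ring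
  have hQ' : HasDerivAt (fun y => 4 * y ^ 2 - (4 * ν ^ 2 - 1)) (8 * x) x := by
    refine ((((hasDerivAt_id' x).fun_pow 2).const_mul 4).sub_const _).congr_deriv ?_; ring
  refine (((hasDerivAt_id' x).fun_mul (hf.fun_pow 2)).fun_add
    (((hasDerivAt_id' x).fun_mul (hu.fun_pow 2)).fun_div hQ' hQ)).congr_deriv ?_
  have hf'' : f'' x = -(x * f' x + (x ^ 2 - ν ^ 2) * f x) / x ^ 2 := by
    field_simp; linarith
  rw [hf'', eq_div_iff (pow_ne_zero 2 hQ), add_mul, div_mul_cancel₀ _ (pow_ne_zero 2 hQ)]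
  field_simp
  ring

theorem besselSonin_antitoneOn {a : ℝ} (ha : 0 < a) (hν : 1 ≤ 4 * ν ^ 2)
    (haν : 4 * ν ^ 2 - 1 < 4 * a ^ 2)
    (hf : ∀ x ∈ Ici a, HasDerivAt f (f' x) x) (hf' : ∀ x ∈ Ici a, HasDerivAt f' (f'' x) x)
    (hode : ∀ x ∈ Ici a, x ^ 2 * f'' x + x * f' x + (x ^ 2 - ν ^ 2) * f x = 0) :
    AntitoneOn (besselSonin ν f f') (Ici a) := by
  have hQ : ∀ x ∈ Ici a, 0 < 4 * x ^ 2 - (4 * ν ^ 2 - 1) := fun x (hx : a ≤ x) => by nlinarith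
  have hderiv : ∀ x ∈ Ici a, HasDerivAt (besselSonin ν f f')
      (-2 * (4 * ν ^ 2 - 1) * (f x + 2 * x * f' x) ^ 2 / (4 * x ^ 2 - (4 * ν ^ 2 - 1)) ^ 2) x :=
    fun x hx => hasDerivAt_besselSonin (ha.trans_le hx).ne' (hQ x hx).ne' (hf x hx) (hf' x hx)
      (hode x hx)
  refine antitoneOn_of_deriv_nonpos (convex_Ici a)
    (fun x hx => (hderiv x hx).continuousAt.continuousWithinAt)
    (fun x hx => (hderiv x (interior_subset hx)).differentiableAt.differentiableWithinAt)
    (fun x hx => ?_)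
  rw [(hderiv x (interior_subset hx)).deriv]
  refine div_nonpos_of_nonpos_of_nonneg ?_ (sq_nonneg _)
  nlinarith [sq_nonneg (f x + 2 * x * f' x)]

theorem mul_sq_le_besselSonin {x : ℝ} (hx : 0 ≤ x) (hQ : 0 < 4 * x ^ 2 - (4 * ν ^ 2 - 1)) :
    x * f x ^ 2 ≤ besselSonin ν f f' x :=
  le_add_of_nonneg_right (by positivity)

end Sonin

theorem abs_tsum_sub_sum_range_le {c : ℕ → ℝ} (hc : Summable c) {n : ℕ}
    (h : ∀ k, n ≤ k → |c (k + 1)| ≤ |c k| / 2) :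
    |∑' k, c k - ∑ k ∈ range n, c k| ≤ 2 * |c n| := by
  have hgeom : ∀ k, |c (k + n)| ≤ |c n| * (1 / 2) ^ k := by
    intro k
    induction k with
    | zero => simp
    | succ k ih =>
      rw [show k + 1 + n = k + n + 1 by ring, pow_succ]
      linarith [h (k + n) (by omega)]
  have hnorm : Summable fun k => ‖c (k + n)‖ := ((summable_nat_add_iff n).2 hc).norm
  rw [← hc.sum_add_tsum_nat_add n, add_sub_cancel_left, ← Real.norm_eq_abs]
  calc ‖∑' k, c (k + n)‖ ≤ ∑' k, ‖c (k + n)‖ := norm_tsum_le_tsum_norm hnorm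
    _ ≤ ∑' k : ℕ, |c n| * (1 / 2) ^ k :=
        hnorm.tsum_le_tsum hgeom (summable_geometric_two.mul_left _)
    _ = 2 * |c n| := by rw [tsum_mul_left, tsum_geometric_two, mul_comm]

theorem abs_le_rpow_neg_half_of_mul_sq_le_one {x y : ℝ} (hx : 0 < x) (h : x * y ^ 2 ≤ 1) :
    |y| ≤ x ^ (-(1 / 2) : ℝ) :=
  calc |y| = √(y ^ 2) := (Real.sqrt_sq_eq_abs y).symm
    _ ≤ √(x⁻¹) := Real.sqrt_le_sqrt (by rw [inv_eq_one_div, le_div_iff₀ hx]; linarith)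
    _ = x ^ (-(1 / 2) : ℝ) := by rw [Real.sqrt_eq_rpow, Real.inv_rpow hx.le, Real.rpow_neg hx.le]

theorem sq_succ_le_factorial_add_two (k : ℕ) : ((k : ℝ) + 1) ^ 2 ≤ (k + 2)! := by
  have h : (k + 1) ^ 2 ≤ (k + 2)! := by
    rw [sq, factorial_succ, factorial_succ]
    nlinarith [factorial_pos k]
  exact_mod_cast h

namespace BesselJTwo

/-- The series of `J₂`, `J₂'` and `J₂''` all have terms of this shape, so that summability and
termwise differentiation are proved once for all three. -/
noncomputable def term (p : ℕ → ℝ) (j : ℕ) (x : ℝ) (k : ℕ) : ℝ :=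
  (-1) ^ k * (p k * (x / 2) ^ (2 * k + j)) / (k ! * (k + 2)!)

theorem abs_term_le {p : ℕ → ℝ} {j k : ℕ} {x R : ℝ} (hp : |p k| ≤ ((k : ℝ) + 1) ^ 2)
    (hj : j ≤ 2) (hR : 1 ≤ R) (hx : |x| ≤ 2 * R) :
    |term p j x k| ≤ R ^ 2 * ((R ^ 2) ^ k / k !) := by
  have hk : (0 : ℝ) < k ! := by positivity
  have hx2 : |x / 2| ^ (2 * k + j) ≤ R ^ (2 * k + 2) :=
    calc |x / 2| ^ (2 * k + j) ≤ R ^ (2 * k + j) := by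
          gcongr; rw [abs_div, abs_two]; linarith
      _ ≤ R ^ (2 * k + 2) := pow_le_pow_right₀ hR (by omega)
  calc |term p j x k| = |p k| * |x / 2| ^ (2 * k + j) / (k ! * (k + 2)!) := by
        simp [term, abs_mul, abs_div, abs_pow]
    _ ≤ ((k : ℝ) + 1) ^ 2 * R ^ (2 * k + 2) / (k ! * ((k : ℝ) + 1) ^ 2) := by
        gcongr
        exact sq_succ_le_factorial_add_two k
    _ = R ^ 2 * ((R ^ 2) ^ k / k !) := by
        field_simp
        ring

theorem summable_term {p : ℕ → ℝ} {j : ℕ} (hp : ∀ k, |p k| ≤ ((k : ℝ) + 1) ^ 2) (hj : j ≤ 2)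
    (x : ℝ) : Summable (term p j x) :=
  .of_norm_bounded ((Real.summable_pow_div_factorial _).mul_left ((1 + |x|) ^ 2))
    fun k => abs_term_le (hp k) hj (by linarith [abs_nonneg x]) (by linarith [abs_nonneg x])

theorem hasDerivAt_term {p q : ℕ → ℝ} {j : ℕ} (hq : ∀ k, q k = p k * (2 * k + j + 1) / 2)
    (k : ℕ) (x : ℝ) : HasDerivAt (term p (j + 1) · k) (term q j x k) x := by
  have h := (((hasDerivAt_id' x).div_const 2).fun_pow (2 * k + j + 1)).const_mul ((-1) ^ k * p k)
    |>.div_const ((k ! : ℝ) * (k + 2)!)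
  refine (h.congr_deriv ?_).congr_of_eventuallyEq (Filter.Eventually.of_forall fun y => ?_)
  · simp only [term, hq, Nat.add_sub_cancel]
    push_cast
    ring
  · simp only [term]
    ring

theorem hasDerivAt_tsum_term {p q : ℕ → ℝ} {j : ℕ} (hj : j ≤ 1)
    (hp : ∀ k, |p k| ≤ ((k : ℝ) + 1) ^ 2) (hq : ∀ k, q k = p k * (2 * k + j + 1) / 2)
    (hq' : ∀ k, |q k| ≤ ((k : ℝ) + 1) ^ 2) (x : ℝ) :
    HasDerivAt (fun y => ∑' k, term p (j + 1) y k) (∑' k, term q j x k) x := by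
  have hx : x ∈ Ioo (-2 * (1 + |x|)) (2 * (1 + |x|)) :=
    ⟨by linarith [neg_abs_le x, abs_nonneg x], by linarith [le_abs_self x, abs_nonneg x]⟩
  refine hasDerivAt_tsum_of_isPreconnected
    ((Real.summable_pow_div_factorial ((1 + |x|) ^ 2)).mul_left ((1 + |x|) ^ 2)) isOpen_Ioo
    isPreconnected_Ioo (fun k y _ => hasDerivAt_term hq k y) (fun k y hy => ?_) hx
    (summable_term hp (by omega) x) hx
  rw [Real.norm_eq_abs]
  exact abs_term_le (hq' k) (by omega) (by linarith [abs_nonneg x])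
    (abs_le.2 ⟨by linarith [hy.1], by linarith [hy.2]⟩)

noncomputable def jTwo (x : ℝ) : ℝ := ∑' k, term (fun _ => 1) 2 x k

noncomputable def jTwoDeriv (x : ℝ) : ℝ := ∑' k, term (fun k => k + 1) 1 x k

noncomputable def jTwoDeriv2 (x : ℝ) : ℝ := ∑' k, term (fun k => (k + 1) * (2 * k + 1) / 2) 0 x k

theorem abs_one_le_succ_sq (k : ℕ) : |(1 : ℝ)| ≤ ((k : ℝ) + 1) ^ 2 := by
  rw [abs_one]; nlinarith [k.cast_nonneg (α := ℝ)]

theorem abs_succ_le_succ_sq (k : ℕ) : |(k : ℝ) + 1| ≤ ((k : ℝ) + 1) ^ 2 := by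
  rw [abs_of_nonneg (by positivity)]; nlinarith [k.cast_nonneg (α := ℝ)]

theorem abs_succ_mul_two_mul_add_one_div_two_le (k : ℕ) :
    |((k : ℝ) + 1) * (2 * k + 1) / 2| ≤ ((k : ℝ) + 1) ^ 2 := by
  rw [abs_of_nonneg (by positivity)]; nlinarith [k.cast_nonneg (α := ℝ)]

theorem hasDerivAt_jTwo (x : ℝ) : HasDerivAt jTwo (jTwoDeriv x) x :=
  hasDerivAt_tsum_term le_rfl abs_one_le_succ_sq (fun k => by ring) abs_succ_le_succ_sq x

theorem hasDerivAt_jTwoDeriv (x : ℝ) : HasDerivAt jTwoDeriv (jTwoDeriv2 x) x :=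
  hasDerivAt_tsum_term zero_le_one abs_succ_le_succ_sq (fun k => by ring)
    abs_succ_mul_two_mul_add_one_div_two_le x

theorem term_bessel_combination (x : ℝ) (k : ℕ) :
    x ^ 2 * term (fun k => (k + 1) * (2 * k + 1) / 2) 0 x k + x * term (fun k => k + 1) 1 x k
      - 4 * term (fun _ => 1) 2 x k = 4 * k * (k + 2) * term (fun _ => 1) 2 x k := by
  simp only [term]
  ring

theorem mul_term_succ (p : ℕ → ℝ) (j : ℕ) (x : ℝ) (k : ℕ) :
    p k * term p j x (k + 1) = -(p (k + 1) * (x / 2) ^ 2 / ((k + 1) * (k + 3))) * term p j x k := by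
  simp only [term, Nat.factorial_succ, show k + 1 + 2 = k + 2 + 1 by ring]
  push_cast
  field_simp
  ring

theorem term_succ (x : ℝ) (k : ℕ) :
    4 * (k + 1) * (k + 3) * term (fun _ => 1) 2 x (k + 1) = -(x ^ 2 * term (fun _ => 1) 2 x k) := by
  have h := mul_term_succ (fun _ => 1) 2 x k
  rw [one_mul] at h
  rw [h]
  field_simp
  ring

theorem jTwo_ode (x : ℝ) :
    x ^ 2 * jTwoDeriv2 x + x * jTwoDeriv x + (x ^ 2 - 2 ^ 2) * jTwo x = 0 := by
  have s0 := summable_term abs_one_le_succ_sq le_rfl x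
  have s1 := summable_term abs_succ_le_succ_sq one_le_two x
  have s2 := summable_term abs_succ_mul_two_mul_add_one_div_two_le zero_le_two x
  have hsum : Summable fun k : ℕ => 4 * k * (k + 2) * term (fun _ => 1) 2 x k :=
    (((s2.mul_left _).add (s1.mul_left _)).sub (s0.mul_left 4)).congr (term_bessel_combination x)
  calc x ^ 2 * jTwoDeriv2 x + x * jTwoDeriv x + (x ^ 2 - 2 ^ 2) * jTwo x
      = ∑' k, (x ^ 2 * term (fun k => (k + 1) * (2 * k + 1) / 2) 0 x k
          + x * term (fun k => k + 1) 1 x k - 4 * term (fun _ => 1) 2 x k) + x ^ 2 * jTwo x := by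
        rw [((s2.mul_left _).add (s1.mul_left _)).tsum_sub (s0.mul_left 4),
          (s2.mul_left _).tsum_add (s1.mul_left _), tsum_mul_left, tsum_mul_left, tsum_mul_left,
          jTwo, jTwoDeriv, jTwoDeriv2]
        ring
    _ = ∑' k : ℕ, 4 * (k + 1) * (k + 3) * term (fun _ => 1) 2 x (k + 1) + x ^ 2 * jTwo x := by
        rw [tsum_congr (term_bessel_combination x), hsum.tsum_eq_zero_add]
        push_cast
        ring_nf
    _ = 0 := by
        rw [tsum_congr (term_succ x), tsum_neg, tsum_mul_left, jTwo]
        ring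

theorem abs_term_succ_le_half {p : ℕ → ℝ} {j k : ℕ} {x : ℝ} (hx : |x| ≤ 5 / 2) (hk : 1 ≤ k)
    (hpk : 0 < p k) (hp : |p (k + 1)| ≤ 2 * p k) :
    |term p j x (k + 1)| ≤ |term p j x k| / 2 := by
  have hx2 : (x / 2) ^ 2 ≤ 25 / 16 := by
    rw [div_pow, ← sq_abs]; nlinarith [abs_nonneg x]
  have hk8 : (8 : ℝ) ≤ (k + 1) * (k + 3) := by
    have : (1 : ℝ) ≤ k := by exact_mod_cast hk
    nlinarith
  have hratio : |p (k + 1)| * (x / 2) ^ 2 / ((k + 1) * (k + 3)) ≤ p k / 2 := by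
    rw [div_le_iff₀ (by positivity)]
    nlinarith [abs_nonneg (p (k + 1)), sq_nonneg (x / 2)]
  refine le_of_mul_le_mul_left ?_ hpk
  calc p k * |term p j x (k + 1)| = |p k * term p j x (k + 1)| := by
        rw [abs_mul, abs_of_pos hpk]
    _ = |p (k + 1)| * (x / 2) ^ 2 / ((k + 1) * (k + 3)) * |term p j x k| := by
        rw [mul_term_succ, abs_mul, abs_neg, abs_div, abs_mul, abs_of_nonneg (sq_nonneg (x / 2)),
          abs_of_pos (by positivity : (0 : ℝ) < (k + 1) * (k + 3))]
    _ ≤ p k / 2 * |term p j x k| := by gcongr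
    _ = p k * (|term p j x k| / 2) := by ring

theorem abs_jTwo_sub_sum_le {x : ℝ} (hx : |x| ≤ 5 / 2) {n : ℕ} (hn : 1 ≤ n) :
    |jTwo x - ∑ k ∈ range n, term (fun _ => 1) 2 x k| ≤ 2 * |term (fun _ => 1) 2 x n| :=
  abs_tsum_sub_sum_range_le (summable_term abs_one_le_succ_sq le_rfl x) fun k hk =>
    abs_term_succ_le_half hx (hn.trans hk) one_pos (by norm_num)

theorem abs_jTwoDeriv_sub_sum_le {x : ℝ} (hx : |x| ≤ 5 / 2) {n : ℕ} (hn : 1 ≤ n) :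
    |jTwoDeriv x - ∑ k ∈ range n, term (fun k => k + 1) 1 x k| ≤
      2 * |term (fun k => k + 1) 1 x n| :=
  abs_tsum_sub_sum_range_le (summable_term abs_succ_le_succ_sq one_le_two x) fun k hk =>
    abs_term_succ_le_half hx (hn.trans hk) (by positivity) (by
      rw [abs_of_nonneg (by positivity)]; push_cast; linarith [k.cast_nonneg (α := ℝ)])

theorem mul_jTwo_sq_le_one {x : ℝ} (hx0 : 0 ≤ x) (hx : x ≤ 5 / 2) : x * jTwo x ^ 2 ≤ 1 := by
  have h := abs_jTwo_sub_sum_le (abs_le.2 ⟨by linarith, hx⟩) one_le_two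
  have hsum : ∑ k ∈ range 2, term (fun _ => 1) 2 x k = x ^ 2 / 8 - x ^ 4 / 96 := by
    norm_num [Finset.sum_range_succ, term, Nat.factorial]
    ring
  have hterm : |term (fun _ => 1) 2 x 2| = x ^ 6 / 3072 := by
    rw [abs_of_nonneg (by simp only [term]; positivity)]
    norm_num [term, Nat.factorial]
    ring
  rw [hsum, hterm, abs_le] at h
  have hy : x ^ 2 ≤ 25 / 4 := by nlinarith
  have hlow : -(3 / 5) ≤ jTwo x := by nlinarith [pow_nonneg hx0 6]
  have hupp : jTwo x ≤ 3 / 5 := by nlinarith [pow_nonneg hx0 6]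
  nlinarith

theorem besselSonin_jTwo_five_halves_le_one : besselSonin 2 jTwo jTwoDeriv (5 / 2) ≤ 1 := by
  have h52 : |(5 / 2 : ℝ)| ≤ 5 / 2 := by norm_num [abs_of_pos]
  have hJ := abs_jTwo_sub_sum_le h52 (n := 4) (by norm_num)
  have hJ' := abs_jTwoDeriv_sub_sum_le h52 (n := 4) (by norm_num)
  norm_num [Finset.sum_range_succ, term, Nat.factorial, abs_le] at hJ hJ'
  norm_num [besselSonin]
  nlinarith

end BesselJTwo

open BesselJTwo in
/-- For real `x > 0`, the Bessel function of the first kind of order 2,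
`J₂(x) = ∑_{k≥0} (−1)^k (x/2)^{2k+2} / (k! (k+2)!)`, satisfies `|J₂(x)| ≤ x^{−1/2}`. -/
theorem besselJ_two_bound (J₂ : ℝ → ℝ)
    (hJ : ∀ x : ℝ, J₂ x = ∑' k : ℕ,
      (-1 : ℝ) ^ k * (x / 2) ^ (2 * k + 2) / ((Nat.factorial k : ℝ) * (Nat.factorial (k + 2) : ℝ)))
    (x : ℝ) (hx : 0 < x) :
    |J₂ x| ≤ x ^ (-(1 / 2) : ℝ) := by
  have hJ₂ : J₂ = jTwo := funext fun y => by simp only [hJ y, jTwo, term, one_mul]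
  rw [hJ₂]
  refine abs_le_rpow_neg_half_of_mul_sq_le_one hx ?_
  rcases le_or_gt x (5 / 2) with hsmall | hlarge
  · exact mul_jTwo_sq_le_one hx.le hsmall
  have hanti : AntitoneOn (besselSonin 2 jTwo jTwoDeriv) (Ici (5 / 2)) :=
    besselSonin_antitoneOn (by norm_num) (by norm_num) (by norm_num)
      (fun y _ => hasDerivAt_jTwo y) (fun y _ => hasDerivAt_jTwoDeriv y) (fun y _ => jTwo_ode y)
  calc x * jTwo x ^ 2 ≤ besselSonin 2 jTwo jTwoDeriv x := mul_sq_le_besselSonin hx.le (by nlinarith)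
    _ ≤ besselSonin 2 jTwo jTwoDeriv (5 / 2) := hanti (mem_Ici.2 le_rfl) hlarge.le hlarge.le
    _ ≤ 1 := besselSonin_jTwo_five_halves_le_one
end

section
/- For all real t, |Γ(3/2 − it) / Γ(−1 + it)| ≤ |(1/2 + it)(−1 + it)| · √|t|. -/
/-!
By the functional equation, `Γ(3/2 - it) / Γ(-1 + it)` equals
`(1/2 - it) · it · (-1 + it) · Γ(1/2 - it) / Γ(1 + it)`. The reflection formula gives
`|Γ(1/2 + it)|² = π / cosh(πt)` and `|Γ(1 + it)|² = πt / sinh(πt)`, so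
`|t| · |Γ(1/2 - it)| / |Γ(1 + it)| ≤ √|t|` amounts to `|sinh(πt)| ≤ cosh(πt)`.
-/

open Complex

open scoped Real ComplexConjugate

lemma Real.abs_sinh_le_cosh (x : ℝ) : |Real.sinh x| ≤ Real.cosh x :=
  abs_le_of_sq_le_sq (by rw [Real.cosh_sq]; linarith) (Real.cosh_pos x).le

namespace Complex

lemma norm_Gamma_conj (s : ℂ) : ‖Gamma (conj s)‖ = ‖Gamma s‖ := by
  rw [Gamma_conj, RCLike.norm_conj]

lemma Gamma_add_two {s : ℂ} (h₀ : s ≠ 0) (h₁ : s + 1 ≠ 0) :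
    Gamma (s + 2) = s * (s + 1) * Gamma s := by
  rw [show s + 2 = s + 1 + 1 by ring, Gamma_add_one _ h₁, Gamma_add_one _ h₀]
  ring

-- On the critical line `1 - s = conj s`, so the reflection formula computes `‖Γ s‖ ^ 2`.
lemma norm_Gamma_one_half_add_mul_I_sq (t : ℝ) :
    ‖Gamma (1 / 2 + t * I)‖ ^ 2 = π / Real.cosh (π * t) := by
  have hsin : sin (π * (1 / 2 + t * I)) = Real.cosh (π * t) := by
    rw [show (π : ℂ) * (1 / 2 + t * I) = (π * t : ℝ) * I + π / 2 by push_cast; ring,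
      sin_add_pi_div_two, cos_mul_I, ofReal_cosh]
  have h := Gamma_mul_Gamma_one_sub (1 / 2 + t * I)
  rw [show 1 - (1 / 2 + t * I) = conj (1 / 2 + t * I) by apply Complex.ext <;> simp; norm_num,
    Gamma_conj, mul_conj', hsin] at h
  exact_mod_cast h

lemma norm_Gamma_one_add_mul_I_sq_mul_sinh (t : ℝ) :
    ‖Gamma (1 + t * I)‖ ^ 2 * Real.sinh (π * t) = π * t := by
  rcases eq_or_ne t 0 with rfl | ht
  · simp
  have htI : (t : ℂ) * I ≠ 0 := by simp [ht]
  have hsin : sin (π * (t * I)) = Real.sinh (π * t) * I := by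
    rw [show (π : ℂ) * (t * I) = (π * t : ℝ) * I by push_cast; ring, sin_mul_I, ofReal_sinh]
  have hsinh : (Real.sinh (π * t) : ℂ) ≠ 0 := by
    exact_mod_cast Real.sinh_ne_zero.mpr (mul_ne_zero Real.pi_ne_zero ht)
  have h := Gamma_mul_Gamma_one_sub (t * I)
  rw [show 1 - t * I = conj (1 + t * I) by apply Complex.ext <;> simp, Gamma_conj, hsin] at h
  have h' : Gamma (1 + t * I) * conj (Gamma (1 + t * I)) * Real.sinh (π * t) = π * t := by
    nth_rw 1 [add_comm, Gamma_add_one _ htI]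
    rw [mul_assoc _ (Gamma _), h]
    field_simp
  rw [mul_conj'] at h'
  exact_mod_cast h'

lemma norm_Gamma_one_half_add_mul_I_mul_sqrt_le (t : ℝ) :
    ‖Gamma (1 / 2 + t * I)‖ * √|t| ≤ ‖Gamma (1 + t * I)‖ := by
  rcases eq_or_ne t 0 with rfl | ht
  · simp
  have hsinh : 0 < |Real.sinh (π * t)| :=
    abs_pos.mpr (Real.sinh_ne_zero.mpr (mul_ne_zero Real.pi_ne_zero ht))
  have hB : ‖Gamma (1 + t * I)‖ ^ 2 = π * |t| / |Real.sinh (π * t)| := by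
    rw [eq_div_iff hsinh.ne', ← abs_of_nonneg (sq_nonneg ‖_‖), ← abs_mul,
      norm_Gamma_one_add_mul_I_sq_mul_sinh, abs_mul, abs_of_pos Real.pi_pos]
  rw [← pow_le_pow_iff_left₀ (by positivity) (norm_nonneg _) two_ne_zero, hB, mul_pow,
    Real.sq_sqrt (abs_nonneg t), norm_Gamma_one_half_add_mul_I_sq, div_mul_eq_mul_div,
    mul_comm _ |t|]
  gcongr
  exact Real.abs_sinh_le_cosh _

end Complex

/-- For all real `t`, `|Γ(3/2 − it)/Γ(−1 + it)| ≤ |(1/2 + it)(−1 + it)| · √|t|`. -/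
theorem gamma_quotient_bound (t : ℝ) :
    ‖Complex.Gamma (3 / 2 - t * Complex.I) / Complex.Gamma (-1 + t * Complex.I)‖
      ≤ ‖(1 / 2 + t * Complex.I) * (-1 + t * Complex.I)‖ * Real.sqrt |t| := by
  rcases eq_or_ne t 0 with rfl | ht
  · simp [show Gamma (-1) = 0 by exact_mod_cast Gamma_neg_nat_eq_zero 1]
  have hnum : ‖Gamma (3 / 2 - t * I)‖ = ‖1 / 2 + t * I‖ * ‖Gamma (1 / 2 + t * I)‖ := by
    rw [show 3 / 2 - t * I = conj (1 / 2 + t * I + 1) by apply Complex.ext <;> simp; norm_num,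
      norm_Gamma_conj, Gamma_add_one _ (by simp [Complex.ext_iff]), norm_mul]
  have hden : ‖Gamma (1 + t * I)‖ = |t| * ‖-1 + t * I‖ * ‖Gamma (-1 + t * I)‖ := by
    rw [show 1 + t * I = -1 + t * I + 2 by ring, Gamma_add_two (by simp [Complex.ext_iff, ht])
      (by simp [ht]), norm_mul, norm_mul, mul_comm ‖-1 + t * I‖]
    simp
  have hΓ : 0 < ‖Gamma (-1 + t * I)‖ :=
    norm_pos_iff.mpr (Gamma_ne_zero fun m h => ht (by simpa using congr_arg im h))
  have hA : ‖Gamma (1 / 2 + t * I)‖ ≤ ‖-1 + t * I‖ * √|t| * ‖Gamma (-1 + t * I)‖ := by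
    refine le_of_mul_le_mul_right ?_ (by positivity : 0 < √|t|)
    calc ‖Gamma (1 / 2 + t * I)‖ * √|t| ≤ ‖Gamma (1 + t * I)‖ :=
          norm_Gamma_one_half_add_mul_I_mul_sqrt_le t
      _ = ‖-1 + t * I‖ * √|t| * ‖Gamma (-1 + t * I)‖ * √|t| := by
          rw [hden]; nth_rw 1 [← Real.mul_self_sqrt (abs_nonneg t)]; ring
  rw [norm_div, div_le_iff₀ hΓ, hnum, norm_mul]
  calc ‖1 / 2 + t * I‖ * ‖Gamma (1 / 2 + t * I)‖
      ≤ ‖1 / 2 + t * I‖ * (‖-1 + t * I‖ * √|t| * ‖Gamma (-1 + t * I)‖) := by gcongr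
    _ = _ := by ring
end
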